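/- arXiv:2603.15144 — 5 statements merged into one kernel-verified Lean document; each statement's English description precedes it below -/
import Mathlib

section
/- Let f : ℝ^d → ℝ be differentiable with L-Lipschitz gradient (L ≥ 0), attaining its infimum f* = inf f > −∞, and satisfying the Polyak–Łojasiewicz condition with parameter μ > 0: 2μ(f(x) − f*) ≤ ‖∇f(x)‖² for all x. Let x ∈ ℝ^d, g ∈ ℝ^d, γ > 0, and x' = x − γ·g. Then f(x') − f* ≤ (1 − γμ)·(f(x) − f*) − (1/(2γ) − L/2)·‖x' − x‖² + (γ/2)·‖g − ∇f(x)‖². -/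
/-!
An `L`-smooth function lies below its quadratic upper model:
`f (x + v) ≤ f x + ⟪∇f x, v⟫ + L/2 ‖v‖²`. For the step `v = -γ g`, the polarization identity
`-γ ⟪∇f x, g⟫ = γ/2 (‖g - ∇f x‖² - ‖g‖² - ‖∇f x‖²)` splits the linear term into the
gradient error, the step length and `-γ/2 ‖∇f x‖²`, and the PŁ inequality bounds the last one by
`-γ μ (f x - f*)`.
-/

open InnerProductSpace Set
open scoped Gradient

variable {E : Type*} [NormedAddCommGroup E] [InnerProductSpace ℝ E] [CompleteSpace E]
  {f : E → ℝ} {L : ℝ}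

lemma hasDerivAt_comp_add_smul_of_differentiableAt {x v : E} {t : ℝ}
    (hf : DifferentiableAt ℝ f (x + t • v)) :
    HasDerivAt (fun s : ℝ => f (x + s • v)) ⟪∇ f (x + t • v), v⟫_ℝ t := by
  have hline : HasDerivAt (fun s : ℝ => x + s • v) v t := by
    simpa using ((hasDerivAt_id t).smul_const v).const_add x
  have hcomp := hf.hasFDerivAt.comp_hasDerivAt t hline
  rwa [hf.hasGradientAt.fderiv_apply] at hcomp

lemma inner_gradient_add_smul_sub_le
    (hlip : ∀ x y, ‖∇ f x - ∇ f y‖ ≤ L * ‖x - y‖) (x v : E) {t : ℝ} (ht : 0 ≤ t) :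
    ⟪∇ f (x + t • v), v⟫_ℝ - ⟪∇ f x, v⟫_ℝ ≤ L * t * ‖v‖ ^ 2 :=
  calc ⟪∇ f (x + t • v), v⟫_ℝ - ⟪∇ f x, v⟫_ℝ
      = ⟪∇ f (x + t • v) - ∇ f x, v⟫_ℝ := (inner_sub_left _ _ _).symm
    _ ≤ ‖∇ f (x + t • v) - ∇ f x‖ * ‖v‖ := real_inner_le_norm _ _
    _ ≤ L * ‖x + t • v - x‖ * ‖v‖ := by gcongr; exact hlip _ _
    _ = L * t * ‖v‖ ^ 2 := by
      rw [add_sub_cancel_left, norm_smul, Real.norm_of_nonneg ht]; ring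

theorem le_add_inner_gradient_add_sq_of_lipschitz_gradient (hf : Differentiable ℝ f)
    (hlip : ∀ x y, ‖∇ f x - ∇ f y‖ ≤ L * ‖x - y‖) (x v : E) :
    f (x + v) ≤ f x + ⟪∇ f x, v⟫_ℝ + L / 2 * ‖v‖ ^ 2 := by
  have hderiv (t : ℝ) := hasDerivAt_comp_add_smul_of_differentiableAt (hf (x + t • v))
  have hmodel (t : ℝ) : HasDerivAt (fun s : ℝ => f x + s * ⟪∇ f x, v⟫_ℝ + L / 2 * s ^ 2 * ‖v‖ ^ 2)
      (⟪∇ f x, v⟫_ℝ + L * t * ‖v‖ ^ 2) t := by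
    refine ((((hasDerivAt_id' t).mul_const ⟪∇ f x, v⟫_ℝ).const_add (f x)).add
      (((hasDerivAt_pow 2 t).const_mul (L / 2)).mul_const (‖v‖ ^ 2))).congr_deriv ?_
    norm_num only [pow_one]; ring
  have hcomparison := image_le_of_deriv_right_le_deriv_boundary (a := 0) (b := 1)
    (fun t _ => (hderiv t).continuousAt.continuousWithinAt)
    (fun t _ => (hderiv t).hasDerivWithinAt) (by simp)
    (fun t _ => (hmodel t).continuousAt.continuousWithinAt)
    (fun t _ => (hmodel t).hasDerivWithinAt)
    (fun t ht => by linarith [inner_gradient_add_smul_sub_le hlip x v ht.1])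
    (right_mem_Icc.2 zero_le_one)
  simpa using hcomparison

theorem le_sub_of_inexact_gradient_step (hf : Differentiable ℝ f)
    (hlip : ∀ x y, ‖∇ f x - ∇ f y‖ ≤ L * ‖x - y‖) (x g : E) {γ : ℝ} (hγ : γ ≠ 0) :
    f (x - γ • g) ≤ f x - γ / 2 * ‖∇ f x‖ ^ 2 - (1 / (2 * γ) - L / 2) * ‖γ • g‖ ^ 2
      + γ / 2 * ‖g - ∇ f x‖ ^ 2 := by
  have hdescent := le_add_inner_gradient_add_sq_of_lipschitz_gradient hf hlip x (-(γ • g))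
  have hpolarization : ⟪∇ f x, -(γ • g)⟫_ℝ
      = γ / 2 * ‖g - ∇ f x‖ ^ 2 - γ / 2 * ‖g‖ ^ 2 - γ / 2 * ‖∇ f x‖ ^ 2 := by
    rw [inner_neg_right, real_inner_smul_right, norm_sub_sq_real, real_inner_comm]; ring
  have hstep : 1 / (2 * γ) * ‖γ • g‖ ^ 2 = γ / 2 * ‖g‖ ^ 2 := by
    rw [norm_smul, Real.norm_eq_abs, mul_pow, sq_abs]; field_simp
  rw [← sub_eq_add_neg, hpolarization, norm_neg] at hdescent
  linarith

theorem stmt_1_general {d : ℕ} (f : EuclideanSpace ℝ (Fin d) → ℝ) (L μ fstar : ℝ)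
    (hdiff : Differentiable ℝ f)
    (hlip : ∀ x y, ‖gradient f x - gradient f y‖ ≤ L * ‖x - y‖)
    (hPL : ∀ y, 2 * μ * (f y - fstar) ≤ ‖gradient f y‖ ^ 2)
    (x g : EuclideanSpace ℝ (Fin d)) (γ : ℝ) (hγ : 0 < γ)
    (x' : EuclideanSpace ℝ (Fin d)) (hx' : x' = x - γ • g) :
    f x' - fstar ≤ (1 - γ * μ) * (f x - fstar)
      - (1 / (2 * γ) - L / 2) * ‖x' - x‖ ^ 2
      + (γ / 2) * ‖g - gradient f x‖ ^ 2 := by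
  have hstep := le_sub_of_inexact_gradient_step hdiff hlip x g hγ.ne'
  have hPLx : γ / 2 * (2 * μ * (f x - fstar)) ≤ γ / 2 * ‖gradient f x‖ ^ 2 :=
    mul_le_mul_of_nonneg_left (hPL x) (by positivity)
  have hdisplacement : ‖x' - x‖ = ‖γ • g‖ := by rw [hx', sub_sub_cancel_left, norm_neg]
  rw [hdisplacement]
  rw [← hx'] at hstep
  linarith

/-- Descent lemma under the Polyak–Łojasiewicz condition for one inexact-gradient
step `x' = x - γ • g` of an `L`-smooth function attaining its infimum `fstar`. -/
theorem stmt_1 {d : ℕ} (f : EuclideanSpace ℝ (Fin d) → ℝ) (L μ fstar : ℝ)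
    (hL : 0 ≤ L) (hμ : 0 < μ)
    (hdiff : Differentiable ℝ f)
    (hlip : ∀ x y, ‖gradient f x - gradient f y‖ ≤ L * ‖x - y‖)
    (hbound : ∀ y, fstar ≤ f y) (hatt : ∃ y, f y = fstar)
    (hPL : ∀ y, 2 * μ * (f y - fstar) ≤ ‖gradient f y‖ ^ 2)
    (x g : EuclideanSpace ℝ (Fin d)) (γ : ℝ) (hγ : 0 < γ)
    (x' : EuclideanSpace ℝ (Fin d)) (hx' : x' = x - γ • g) :
    f x' - fstar ≤ (1 - γ * μ) * (f x - fstar)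
      - (1 / (2 * γ) - L / 2) * ‖x' - x‖ ^ 2
      + (γ / 2) * ‖g - gradient f x‖ ^ 2 :=
  stmt_1_general f L μ fstar hdiff hlip hPL x g γ hγ x' hx'
end

section
/- Let E be a real inner product space, let 𝒢 be a finite index set with |𝒢| = G ≥ 1, and let κ ≥ 0, ζ ≥ 0. Suppose for each i ∈ 𝒢 the vector g_i ∈ E decomposes as g_i = c_i + p_i + m_i + h_i + w, where c_i, p_i, m_i, h_i ∈ E and w ∈ E is a single common vector, and suppose (1/G)·Σ_{i∈𝒢} ‖h_i‖² ≤ ζ². Let ḡ = (1/G)·Σ_{i∈𝒢} g_i, and let a ∈ E satisfy the robust-aggregation inequality ‖a − ḡ‖² ≤ (κ/G)·Σ_{i∈𝒢} ‖g_i − ḡ‖². Then ‖a − ḡ‖² ≤ (8κ(G−1)/G²)·Σ_{i∈𝒢}(‖c_i‖² + ‖p_i‖² + ‖m_i‖²) + (8κ(G−1)/G)·ζ². -/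
/-!
Since `g i - w = c i + p i + m i + h i`, the spread of the `g i` around their mean is at most
their spread around `w` (parallel axis theorem), hence at most
`4 ∑ (‖c i‖² + ‖p i‖² + ‖m i‖² + ‖h i‖²)`. The factor `2 (G - 1) / G` costs nothing: it is at
least `1` when `G ≥ 2`, and for `G = 1` the spread around the mean vanishes. The robustness
inequality and the heterogeneity bound `∑ ‖h i‖² ≤ G ζ²` then give the claim.
-/

open Finset
open scoped RealInnerProductSpace

lemma norm_add_add_add_sq_le {E : Type*} [SeminormedAddCommGroup E] (a b c d : E) :
    ‖a + b + c + d‖ ^ 2 ≤ 4 * (‖a‖ ^ 2 + ‖b‖ ^ 2 + ‖c‖ ^ 2 + ‖d‖ ^ 2) := by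
  have hle : ‖a + b + c + d‖ ≤ ‖a‖ + ‖b‖ + ‖c‖ + ‖d‖ := norm_add₄_le
  have := pow_le_pow_left₀ (norm_nonneg _) hle 2
  nlinarith [sq_nonneg (‖a‖ - ‖b‖), sq_nonneg (‖a‖ - ‖c‖), sq_nonneg (‖a‖ - ‖d‖),
    sq_nonneg (‖b‖ - ‖c‖), sq_nonneg (‖b‖ - ‖d‖), sq_nonneg (‖c‖ - ‖d‖)]

section Mean

variable {ι E : Type*} [NormedAddCommGroup E] [InnerProductSpace ℝ E] (s : Finset ι) (g : ι → E)

lemma sum_sub_mean_eq_zero : ∑ i ∈ s, (g i - (#s : ℝ)⁻¹ • ∑ j ∈ s, g j) = 0 := by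
  rcases s.eq_empty_or_nonempty with rfl | hs
  · simp
  · rw [sum_sub_distrib, sum_const, ← Nat.cast_smul_eq_nsmul ℝ, smul_inv_smul₀ (by positivity),
      sub_self]

lemma sum_norm_sub_sq_eq_sum_norm_sub_mean_sq_add (w : E) :
    ∑ i ∈ s, ‖g i - w‖ ^ 2 = ∑ i ∈ s, ‖g i - (#s : ℝ)⁻¹ • ∑ j ∈ s, g j‖ ^ 2
      + #s * ‖(#s : ℝ)⁻¹ • ∑ j ∈ s, g j - w‖ ^ 2 := by
  set μ := (#s : ℝ)⁻¹ • ∑ j ∈ s, g j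
  have hsplit : ∀ i, g i - w = (g i - μ) + (μ - w) := fun i => by abel
  have hcross : ∑ i ∈ s, ⟪g i - μ, μ - w⟫ = 0 := by
    rw [← sum_inner, sum_sub_mean_eq_zero, inner_zero_left]
  simp only [hsplit, norm_add_sq_real, sum_add_distrib, ← mul_sum, hcross, sum_const,
    nsmul_eq_mul]
  ring

lemma sum_norm_sub_mean_sq_le (w : E) :
    ∑ i ∈ s, ‖g i - (#s : ℝ)⁻¹ • ∑ j ∈ s, g j‖ ^ 2 ≤ ∑ i ∈ s, ‖g i - w‖ ^ 2 := by
  rw [sum_norm_sub_sq_eq_sum_norm_sub_mean_sq_add s g w]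
  exact le_add_of_nonneg_right (by positivity)

lemma sum_norm_sub_mean_sq_eq_zero_of_card_le_one (hs : #s ≤ 1) :
    ∑ i ∈ s, ‖g i - (#s : ℝ)⁻¹ • ∑ j ∈ s, g j‖ ^ 2 = 0 := by
  refine sum_eq_zero fun i hi => ?_
  obtain rfl : s = {i} :=
    eq_singleton_iff_unique_mem.mpr ⟨hi, fun j hj => card_le_one.mp hs j hj i hi⟩
  simp

lemma sum_norm_sub_mean_sq_le_two_mul (w : E) :
    ∑ i ∈ s, ‖g i - (#s : ℝ)⁻¹ • ∑ j ∈ s, g j‖ ^ 2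
      ≤ 2 * (#s - 1) / #s * ∑ i ∈ s, ‖g i - w‖ ^ 2 := by
  rcases le_or_gt #s 1 with hs | hs
  · rw [sum_norm_sub_mean_sq_eq_zero_of_card_le_one s g hs]
    rcases Nat.le_one_iff_eq_zero_or_eq_one.mp hs with h | h <;> simp [h]
  · have hn : (2 : ℝ) ≤ #s := by exact_mod_cast hs
    have hcoef : 1 ≤ 2 * ((#s : ℝ) - 1) / #s := by
      rw [le_div_iff₀ (by positivity)]; linarith
    exact (sum_norm_sub_mean_sq_le s g w).trans (le_mul_of_one_le_left (by positivity) hcoef)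

end Mean

theorem stmt_3_general {E : Type*} [NormedAddCommGroup E] [InnerProductSpace ℝ E]
    {ι : Type*} [Fintype ι] (hG : 1 ≤ Fintype.card ι)
    (κ ζ : ℝ) (hκ : 0 ≤ κ)
    (g c p m h : ι → E) (w : E)
    (hdecomp : ∀ i, g i = c i + p i + m i + h i + w)
    (hhet : (1 / (Fintype.card ι : ℝ)) * ∑ i, ‖h i‖ ^ 2 ≤ ζ ^ 2)
    (a ghat : E)
    (hghat : ghat = (1 / (Fintype.card ι : ℝ)) • ∑ i, g i)
    (hrobust : ‖a - ghat‖ ^ 2 ≤ (κ / (Fintype.card ι : ℝ)) * ∑ i, ‖g i - ghat‖ ^ 2) :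
    ‖a - ghat‖ ^ 2 ≤
      (8 * κ * ((Fintype.card ι : ℝ) - 1) / (Fintype.card ι : ℝ) ^ 2) *
        ∑ i, (‖c i‖ ^ 2 + ‖p i‖ ^ 2 + ‖m i‖ ^ 2)
      + (8 * κ * ((Fintype.card ι : ℝ) - 1) / (Fintype.card ι : ℝ)) * ζ ^ 2 := by
  set n : ℝ := (Fintype.card ι : ℝ)
  set T := ∑ i, (‖c i‖ ^ 2 + ‖p i‖ ^ 2 + ‖m i‖ ^ 2)
  set H := ∑ i, ‖h i‖ ^ 2
  have hn : 1 ≤ n := Nat.one_le_cast.mpr hG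
  have hcoef : 0 ≤ 2 * (n - 1) / n := div_nonneg (by linarith) (by linarith)
  have hspread : ∑ i, ‖g i - w‖ ^ 2 ≤ 4 * T + 4 * H := by
    simp only [T, H, mul_sum, ← sum_add_distrib]
    refine sum_le_sum fun i _ => ?_
    rw [hdecomp i, add_sub_cancel_right]
    linarith [norm_add_add_add_sq_le (c i) (p i) (m i) (h i)]
  have hvar : ∑ i, ‖g i - ghat‖ ^ 2 ≤ 2 * (n - 1) / n * (4 * T + 4 * H) := by
    rw [hghat, one_div]
    exact (sum_norm_sub_mean_sq_le_two_mul univ g w).trans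
      (mul_le_mul_of_nonneg_left hspread hcoef)
  have hH : H ≤ n * ζ ^ 2 := by
    rwa [one_div, inv_mul_le_iff₀ (by positivity)] at hhet
  calc ‖a - ghat‖ ^ 2 ≤ κ / n * (2 * (n - 1) / n * (4 * T + 4 * H)) :=
        hrobust.trans (mul_le_mul_of_nonneg_left hvar (by positivity))
    _ ≤ κ / n * (2 * (n - 1) / n * (4 * T + 4 * (n * ζ ^ 2))) := by
        gcongr
    _ = _ := by field_simp; ring

/-- Robust aggregation error bound: if each honest vector decomposes as
`g i = c i + p i + m i + h i + w` with heterogeneity `(1/G)·Σ‖h i‖² ≤ ζ²`,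
and `a` satisfies the `(B,κ)`-robust aggregation inequality at the honest set,
then `‖a - ḡ‖²` is controlled by the compression, momentum deviations and
heterogeneity. -/
theorem stmt_3 {E : Type*} [NormedAddCommGroup E] [InnerProductSpace ℝ E]
    {ι : Type*} [Fintype ι] (hG : 1 ≤ Fintype.card ι)
    (κ ζ : ℝ) (hκ : 0 ≤ κ) (hζ : 0 ≤ ζ)
    (g c p m h : ι → E) (w : E)
    (hdecomp : ∀ i, g i = c i + p i + m i + h i + w)
    (hhet : (1 / (Fintype.card ι : ℝ)) * ∑ i, ‖h i‖ ^ 2 ≤ ζ ^ 2)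
    (a ghat : E)
    (hghat : ghat = (1 / (Fintype.card ι : ℝ)) • ∑ i, g i)
    (hrobust : ‖a - ghat‖ ^ 2 ≤ (κ / (Fintype.card ι : ℝ)) * ∑ i, ‖g i - ghat‖ ^ 2) :
    ‖a - ghat‖ ^ 2 ≤
      (8 * κ * ((Fintype.card ι : ℝ) - 1) / (Fintype.card ι : ℝ) ^ 2) *
        ∑ i, (‖c i‖ ^ 2 + ‖p i‖ ^ 2 + ‖m i‖ ^ 2)
      + (8 * κ * ((Fintype.card ι : ℝ) - 1) / (Fintype.card ι : ℝ)) * ζ ^ 2 :=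
  stmt_3_general hG κ ζ hκ g c p m h w hdecomp hhet a ghat hghat hrobust
end

section
/- Let (Ω, μ) be a probability space and E a real inner product space (e.g. ℝ^d). Let f : E → ℝ be differentiable with L-Lipschitz gradient. Let x, x', v ∈ E, η ∈ (0,1], σ ≥ 0, and let G : Ω → E be Bochner integrable with ∫ G dμ = ∇f(x') and ∫ ‖G − ∇f(x')‖² dμ ≤ σ². Define v'(ω) = (1−η)·v + η·G(ω). Then ∫ ‖v' − ∇f(x')‖² dμ ≤ (1−η)·‖v − ∇f(x)‖² + (L²/η)·‖x' − x‖² + η²·σ². -/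
/-!
Write `v' - ∇f(x') = (1 - η) • (v - ∇f(x')) + η • (G - ∇f(x'))`: a constant plus a mean-zero
noise. The two parts are orthogonal in `L²`, so the expected square splits into
`(1 - η)² ‖v - ∇f(x')‖² + η² 𝔼‖G - ∇f(x')‖²`. The noise term is at most `η² σ²`; for the bias,
`‖v - ∇f(x')‖ ≤ ‖v - ∇f(x)‖ + L ‖x' - x‖`, and Young's inequality with weight `η / (1 - η)`
absorbs the factor `(1 - η)²` into `(1 - η)` and `1 / η`.
-/

open MeasureTheory

lemma one_sub_sq_mul_add_sq_le {η : ℝ} (hη : 0 < η) (hη1 : η ≤ 1) (a b : ℝ) :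
    (1 - η) ^ 2 * (a + b) ^ 2 ≤ (1 - η) * a ^ 2 + b ^ 2 / η := by
  have hsos : (1 - η) * a ^ 2 + b ^ 2 / η - (1 - η) ^ 2 * (a + b) ^ 2 =
      ((1 - η) * (η * a - (1 - η) * b) ^ 2 + η * (2 - η) * b ^ 2) / η := by
    field_simp
    ring
  have h1η : 0 ≤ 1 - η := sub_nonneg.2 hη1
  have h2η : 0 ≤ 2 - η := by linarith
  rw [← sub_nonneg, hsos]
  positivity

lemma one_sub_sq_mul_norm_sub_sq_le {E : Type*} [SeminormedAddCommGroup E] {η : ℝ} (hη : 0 < η)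
    (hη1 : η ≤ 1) (u w w' : E) :
    (1 - η) ^ 2 * ‖u - w'‖ ^ 2 ≤ (1 - η) * ‖u - w‖ ^ 2 + ‖w - w'‖ ^ 2 / η :=
  calc (1 - η) ^ 2 * ‖u - w'‖ ^ 2 ≤ (1 - η) ^ 2 * (‖u - w‖ + ‖w - w'‖) ^ 2 := by
        gcongr
        exact norm_sub_le_norm_sub_add_norm_sub u w w'
    _ ≤ (1 - η) * ‖u - w‖ ^ 2 + ‖w - w'‖ ^ 2 / η := one_sub_sq_mul_add_sq_le hη hη1 _ _

section BiasVariance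

variable {Ω : Type*} [MeasurableSpace Ω] {μ : Measure Ω} [IsProbabilityMeasure μ]
  {E : Type*} [NormedAddCommGroup E] [InnerProductSpace ℝ E] [CompleteSpace E]

/-- Equality holds when `‖Z‖²` is integrable; otherwise the left side is a junk `0`. -/
lemma integral_norm_const_add_sq_le {Z : Ω → E} (hZ : Integrable Z μ) (hZ0 : ∫ ω, Z ω ∂μ = 0)
    (a : E) : ∫ ω, ‖a + Z ω‖ ^ 2 ∂μ ≤ ‖a‖ ^ 2 + ∫ ω, ‖Z ω‖ ^ 2 ∂μ := by
  have hexpand : (fun ω ↦ ‖a + Z ω‖ ^ 2) =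
      fun ω ↦ (‖a‖ ^ 2 + 2 * inner ℝ a (Z ω)) + ‖Z ω‖ ^ 2 := by
    funext ω
    exact norm_add_sq_real a (Z ω)
  have hcross : Integrable (fun ω ↦ ‖a‖ ^ 2 + 2 * inner ℝ a (Z ω)) μ :=
    (integrable_const _).add ((hZ.const_inner a).const_mul 2)
  have hcross_integral : ∫ ω, ‖a‖ ^ 2 + 2 * inner ℝ a (Z ω) ∂μ = ‖a‖ ^ 2 := by
    rw [integral_add (integrable_const _) ((hZ.const_inner a).const_mul 2), integral_const_mul,
      integral_inner hZ, hZ0]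
    simp
  by_cases hZ2 : Integrable (fun ω ↦ ‖Z ω‖ ^ 2) μ
  · rw [hexpand, integral_add hcross hZ2, hcross_integral]
  · rw [integral_undef (by rwa [hexpand, integrable_add_iff_integrable_right' hcross])]
    positivity

end BiasVariance

theorem stmt_5_general {Ω : Type*} [MeasurableSpace Ω] (μ : Measure Ω)
    [IsProbabilityMeasure μ]
    {E : Type*} [NormedAddCommGroup E] [InnerProductSpace ℝ E] [CompleteSpace E]
    (f : E → ℝ) (L : ℝ)
    (hlip : ∀ x y, ‖gradient f x - gradient f y‖ ≤ L * ‖x - y‖)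
    (x x' v : E) (η σ : ℝ) (hη : 0 < η) (hη1 : η ≤ 1)
    (G : Ω → E) (hGint : Integrable G μ)
    (hGmean : ∫ ω, G ω ∂μ = gradient f x')
    (hGvar : ∫ ω, ‖G ω - gradient f x'‖ ^ 2 ∂μ ≤ σ ^ 2)
    (v' : Ω → E) (hv' : ∀ ω, v' ω = (1 - η) • v + η • G ω) :
    ∫ ω, ‖v' ω - gradient f x'‖ ^ 2 ∂μ ≤
      (1 - η) * ‖v - gradient f x‖ ^ 2 + (L ^ 2 / η) * ‖x' - x‖ ^ 2
        + η ^ 2 * σ ^ 2 := by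
  set g' := gradient f x'
  have hnoise : Integrable (fun ω ↦ η • (G ω - g')) μ := (hGint.sub (integrable_const g')).smul η
  have hnoise_mean : ∫ ω, η • (G ω - g') ∂μ = 0 := by
    rw [integral_smul, integral_sub hGint (integrable_const _), hGmean]
    simp
  have hgrad : ‖gradient f x - g'‖ ^ 2 ≤ L ^ 2 * ‖x' - x‖ ^ 2 := by
    rw [← mul_pow, norm_sub_rev x']
    exact pow_le_pow_left₀ (norm_nonneg _) (hlip x x') 2
  calc ∫ ω, ‖v' ω - g'‖ ^ 2 ∂μ = ∫ ω, ‖(1 - η) • (v - g') + η • (G ω - g')‖ ^ 2 ∂μ := by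
        refine integral_congr_ae (ae_of_all _ fun ω ↦ ?_)
        simp only [hv']
        congr 2
        module
    _ ≤ ‖(1 - η) • (v - g')‖ ^ 2 + ∫ ω, ‖η • (G ω - g')‖ ^ 2 ∂μ :=
        integral_norm_const_add_sq_le hnoise hnoise_mean _
    _ = (1 - η) ^ 2 * ‖v - g'‖ ^ 2 + η ^ 2 * ∫ ω, ‖G ω - g'‖ ^ 2 ∂μ := by
        simp only [norm_smul, mul_pow, Real.norm_eq_abs, sq_abs, integral_const_mul]
    _ ≤ (1 - η) * ‖v - gradient f x‖ ^ 2 + ‖gradient f x - g'‖ ^ 2 / η + η ^ 2 * σ ^ 2 := by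
        gcongr
        exact one_sub_sq_mul_norm_sub_sq_le hη hη1 _ _ _
    _ ≤ (1 - η) * ‖v - gradient f x‖ ^ 2 + (L ^ 2 / η) * ‖x' - x‖ ^ 2 + η ^ 2 * σ ^ 2 := by
        rw [div_mul_eq_mul_div]
        gcongr

/-- One-step momentum (SGDM) deviation bound: for an unbiased stochastic
gradient `G` at `x'` with variance at most `σ²` and the momentum update
`v' = (1-η)•v + η•G`, the expected squared deviation of `v'` from `∇f(x')`
contracts. -/
theorem stmt_5 {Ω : Type*} [MeasurableSpace Ω] (μ : Measure Ω)
    [IsProbabilityMeasure μ]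
    {E : Type*} [NormedAddCommGroup E] [InnerProductSpace ℝ E] [CompleteSpace E]
    (f : E → ℝ) (L : ℝ) (hL : 0 ≤ L)
    (hdiff : Differentiable ℝ f)
    (hlip : ∀ x y, ‖gradient f x - gradient f y‖ ≤ L * ‖x - y‖)
    (x x' v : E) (η σ : ℝ) (hη : 0 < η) (hη1 : η ≤ 1) (hσ : 0 ≤ σ)
    (G : Ω → E) (hGint : Integrable G μ)
    (hGmean : ∫ ω, G ω ∂μ = gradient f x')
    (hGvar : ∫ ω, ‖G ω - gradient f x'‖ ^ 2 ∂μ ≤ σ ^ 2)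
    (v' : Ω → E) (hv' : ∀ ω, v' ω = (1 - η) • v + η • G ω) :
    ∫ ω, ‖v' ω - gradient f x'‖ ^ 2 ∂μ ≤
      (1 - η) * ‖v - gradient f x‖ ^ 2 + (L ^ 2 / η) * ‖x' - x‖ ^ 2
        + η ^ 2 * σ ^ 2 :=
  stmt_5_general μ f L hlip x x' v η σ hη hη1 G hGint hGmean hGvar v' hv'
end

section
/- Let (Ω, μ) be a probability space and E a real inner product space. Let f : E → ℝ be differentiable with L-Lipschitz gradient. Let x, x', v, u ∈ E, η ∈ (0,1], σ ≥ 0, and let G : Ω → E be Bochner integrable with ∫ G dμ = ∇f(x') and ∫ ‖G − ∇f(x')‖² dμ ≤ σ². Define v'(ω) = (1−η)·v + η·G(ω) and u'(ω) = u + η·(v'(ω) − u). Then ∫ ‖u' − v'‖² dμ ≤ (1−η)·‖u − v‖² + 6η·‖v − ∇f(x)‖² + 6η·L²·‖x' − x‖² + η²·σ². -/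
/-!
Writing `g = ∇f(x')`, the gap is `u' - v' = (1 - η) • (c - η • (G - g))` with the deterministic
vector `c = (u - v) + η • (v - g)`. Since `G - g` has mean zero, the cross term vanishes in
expectation, so `E‖u' - v'‖² ≤ (1 - η)² (‖c‖² + η² σ²)`. Convexity of the squared norm gives
`(1 - η)² ‖c‖² ≤ (1 - η) ‖u - v‖² + η ‖v - g‖²`, and the Lipschitz bound on the gradient gives
`‖v - g‖² ≤ 2 ‖v - ∇f(x)‖² + 2 L² ‖x' - x‖²`.
-/

open MeasureTheory

theorem integral_norm_const_add_sq_le_s7 {Ω E : Type*} [MeasurableSpace Ω] {μ : Measure Ω}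
    [IsProbabilityMeasure μ] [NormedAddCommGroup E] [InnerProductSpace ℝ E] [CompleteSpace E]
    {X : Ω → E} (hX : Integrable X μ) (hmean : ∫ ω, X ω ∂μ = 0) (c : E) :
    ∫ ω, ‖c + X ω‖ ^ 2 ∂μ ≤ ‖c‖ ^ 2 + ∫ ω, ‖X ω‖ ^ 2 ∂μ := by
  -- equality when `‖c + X‖²` is integrable; otherwise the left side is the junk value `0`
  by_cases hint : Integrable (fun ω ↦ ‖c + X ω‖ ^ 2) μ
  swap
  · rw [integral_undef hint]
    exact add_nonneg (sq_nonneg _) (integral_nonneg fun ω ↦ sq_nonneg _)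
  have hX2 : Integrable (fun ω ↦ ‖X ω‖ ^ 2) μ := by
    have hcX : MemLp (fun ω ↦ c + X ω) 2 μ :=
      (memLp_two_iff_integrable_sq_norm (hX.aestronglyMeasurable.const_add c)).2 hint
    have hXL2 : MemLp X 2 μ := by
      convert hcX.sub (memLp_const c) using 1
      funext ω
      simp
    exact (memLp_two_iff_integrable_sq_norm hX.aestronglyMeasurable).1 hXL2
  have hcross : Integrable (fun ω ↦ 2 * inner ℝ c (X ω)) μ := (hX.const_inner c).const_mul 2
  have hlin : Integrable (fun ω ↦ ‖c‖ ^ 2 + 2 * inner ℝ c (X ω)) μ :=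
    (integrable_const _).add hcross
  apply le_of_eq
  calc ∫ ω, ‖c + X ω‖ ^ 2 ∂μ
      = ∫ ω, (‖c‖ ^ 2 + 2 * inner ℝ c (X ω)) + ‖X ω‖ ^ 2 ∂μ := by
        simp only [norm_add_sq_real]
    _ = ‖c‖ ^ 2 + ∫ ω, ‖X ω‖ ^ 2 ∂μ := by
        rw [integral_add hlin hX2, integral_add (integrable_const _) hcross, integral_const_mul,
          integral_inner hX, hmean]
        simp

theorem sq_one_sub_mul_norm_add_smul_sq_le {E : Type*} [SeminormedAddCommGroup E]
    [NormedSpace ℝ E] {η : ℝ} (hη : 0 ≤ η) (hη1 : η ≤ 1) (a w : E) :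
    (1 - η) ^ 2 * ‖a + η • w‖ ^ 2 ≤ (1 - η) * ‖a‖ ^ 2 + η * ‖w‖ ^ 2 := by
  have htri : ‖a + η • w‖ ≤ ‖a‖ + η * ‖w‖ := by
    simpa [norm_smul, abs_of_nonneg hη] using norm_add_le a (η • w)
  have h1η : 0 ≤ 1 - η := by linarith
  -- convexity of `t ↦ t ^ 2` at the points `‖a‖` and `(1 - η) * ‖w‖`
  calc (1 - η) ^ 2 * ‖a + η • w‖ ^ 2 = ((1 - η) * ‖a + η • w‖) ^ 2 := by ring
    _ ≤ ((1 - η) * ‖a‖ + η * ((1 - η) * ‖w‖)) ^ 2 := by gcongr; linear_combination (1 - η) * htri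
    _ ≤ (1 - η) * ‖a‖ ^ 2 + η * ((1 - η) * ‖w‖) ^ 2 := by
        nlinarith [mul_nonneg (mul_nonneg hη h1η) (sq_nonneg (‖a‖ - (1 - η) * ‖w‖))]
    _ ≤ (1 - η) * ‖a‖ ^ 2 + η * ‖w‖ ^ 2 := by
        gcongr
        nlinarith [norm_nonneg w, mul_nonneg hη (norm_nonneg w)]

theorem norm_sub_sq_le_of_lipschitz_bound {E F : Type*} [SeminormedAddCommGroup E]
    [SeminormedAddCommGroup F] {g : E → F} {L : ℝ} (hg : ∀ x y, ‖g x - g y‖ ≤ L * ‖x - y‖)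
    (v : F) (x x' : E) :
    ‖v - g x'‖ ^ 2 ≤ 2 * ‖v - g x‖ ^ 2 + 2 * L ^ 2 * ‖x' - x‖ ^ 2 := by
  have hlip : ‖g x - g x'‖ ≤ L * ‖x' - x‖ := norm_sub_rev x x' ▸ hg x x'
  calc ‖v - g x'‖ ^ 2 ≤ (‖v - g x‖ + ‖g x - g x'‖) ^ 2 := by
        gcongr; exact norm_sub_le_norm_sub_add_norm_sub _ _ _
    _ ≤ (‖v - g x‖ + L * ‖x' - x‖) ^ 2 := by gcongr
    _ ≤ 2 * ‖v - g x‖ ^ 2 + 2 * L ^ 2 * ‖x' - x‖ ^ 2 := by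
        nlinarith [sq_nonneg (‖v - g x‖ - L * ‖x' - x‖)]

theorem stmt_7_general {Ω : Type*} [MeasurableSpace Ω] (μ : Measure Ω)
    [IsProbabilityMeasure μ]
    {E : Type*} [NormedAddCommGroup E] [InnerProductSpace ℝ E] [CompleteSpace E]
    (f : E → ℝ) (L : ℝ)
    (hlip : ∀ x y, ‖gradient f x - gradient f y‖ ≤ L * ‖x - y‖)
    (x x' v u : E) (η σ : ℝ) (hη : 0 < η) (hη1 : η ≤ 1)
    (G : Ω → E) (hGint : Integrable G μ)
    (hGmean : ∫ ω, G ω ∂μ = gradient f x')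
    (hGvar : ∫ ω, ‖G ω - gradient f x'‖ ^ 2 ∂μ ≤ σ ^ 2)
    (v' : Ω → E) (hv' : ∀ ω, v' ω = (1 - η) • v + η • G ω)
    (u' : Ω → E) (hu' : ∀ ω, u' ω = u + η • (v' ω - u)) :
    ∫ ω, ‖u' ω - v' ω‖ ^ 2 ∂μ ≤
      (1 - η) * ‖u - v‖ ^ 2 + 6 * η * ‖v - gradient f x‖ ^ 2
        + 6 * η * L ^ 2 * ‖x' - x‖ ^ 2 + η ^ 2 * σ ^ 2 := by
  set g := gradient f x'
  set c := u - v + η • (v - g)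
  set X : Ω → E := fun ω ↦ -(η • (G ω - g))
  have hgap : ∀ ω, ‖u' ω - v' ω‖ ^ 2 = (1 - η) ^ 2 * ‖c + X ω‖ ^ 2 := fun ω ↦ by
    rw [← abs_of_nonneg (sub_nonneg.2 hη1), ← Real.norm_eq_abs, ← mul_pow, ← norm_smul, hu', hv']
    congr 2
    module
  have hXint : Integrable X μ := ((hGint.sub (integrable_const g)).smul η).neg
  have hXmean : ∫ ω, X ω ∂μ = 0 := by
    simp [X, integral_neg, integral_smul, integral_sub hGint (integrable_const g), hGmean]
  have hXsq : ∫ ω, ‖X ω‖ ^ 2 ∂μ = η ^ 2 * ∫ ω, ‖G ω - g‖ ^ 2 ∂μ := by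
    simp [X, norm_neg, norm_smul, mul_pow, integral_const_mul, abs_of_pos hη]
  have hsq1η : (1 - η) ^ 2 ≤ 1 := by nlinarith
  calc ∫ ω, ‖u' ω - v' ω‖ ^ 2 ∂μ = (1 - η) ^ 2 * ∫ ω, ‖c + X ω‖ ^ 2 ∂μ := by
        simp only [hgap, integral_const_mul]
    _ ≤ (1 - η) ^ 2 * ‖c‖ ^ 2 + (1 - η) ^ 2 * (η ^ 2 * σ ^ 2) := by
        grw [integral_norm_const_add_sq_le_s7 hXint hXmean c, hXsq, hGvar, mul_add]
    _ ≤ (1 - η) * ‖u - v‖ ^ 2 + η * ‖v - g‖ ^ 2 + η ^ 2 * σ ^ 2 := by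
        grw [sq_one_sub_mul_norm_add_smul_sq_le hη.le hη1, hsq1η, one_mul]
    _ ≤ _ := by
        nlinarith [norm_sub_sq_le_of_lipschitz_bound hlip v x x', sq_nonneg ‖v - gradient f x‖,
          sq_nonneg (L * ‖x' - x‖)]

/-- One-step second-momentum deviation bound of the Byz-DM21 double-momentum
estimator: with `v' = (1-η)•v + η•G` and `u' = u + η•(v' - u)`, the expected
squared gap between the second and first momenta contracts. -/
theorem stmt_7 {Ω : Type*} [MeasurableSpace Ω] (μ : Measure Ω)
    [IsProbabilityMeasure μ]
    {E : Type*} [NormedAddCommGroup E] [InnerProductSpace ℝ E] [CompleteSpace E]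
    (f : E → ℝ) (L : ℝ) (hL : 0 ≤ L)
    (hdiff : Differentiable ℝ f)
    (hlip : ∀ x y, ‖gradient f x - gradient f y‖ ≤ L * ‖x - y‖)
    (x x' v u : E) (η σ : ℝ) (hη : 0 < η) (hη1 : η ≤ 1) (hσ : 0 ≤ σ)
    (G : Ω → E) (hGint : Integrable G μ)
    (hGmean : ∫ ω, G ω ∂μ = gradient f x')
    (hGvar : ∫ ω, ‖G ω - gradient f x'‖ ^ 2 ∂μ ≤ σ ^ 2)
    (v' : Ω → E) (hv' : ∀ ω, v' ω = (1 - η) • v + η • G ω)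
    (u' : Ω → E) (hu' : ∀ ω, u' ω = u + η • (v' ω - u)) :
    ∫ ω, ‖u' ω - v' ω‖ ^ 2 ∂μ ≤
      (1 - η) * ‖u - v‖ ^ 2 + 6 * η * ‖v - gradient f x‖ ^ 2
        + 6 * η * L ^ 2 * ‖x' - x‖ ^ 2 + η ^ 2 * σ ^ 2 :=
  stmt_7_general μ f L hlip x x' v u η σ hη hη1 G hGint hGmean hGvar v' hv' u' hu'
end

section
/- Let (Ω, μ) be a probability space and E a real inner product space. Let f : E → ℝ be differentiable, x, x', v ∈ E, η ∈ (0,1], σ ≥ 0, ℓ ≥ 0. Let G, G' : Ω → E be Bochner integrable with ∫ G dμ = ∇f(x), ∫ G' dμ = ∇f(x'), ∫ ‖G' − ∇f(x')‖² dμ ≤ σ², and ‖G'(ω) − G(ω)‖ ≤ ℓ·‖x' − x‖ for μ-almost every ω. Define the variance-reduced estimator v'(ω) = (1−η)·v + η·G'(ω) + (1−η)·(G'(ω) − G(ω)). Then ∫ ‖v' − ∇f(x')‖² dμ ≤ (1−η)·‖v − ∇f(x)‖² + 2η²·σ² + 2ℓ²·‖x' − x‖². -/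
/-!
Write `g = ∇f(x)`, `g' = ∇f(x')`. Pointwise
`v' - g' = (1-η)(v - g) + Z` with `Z = η (G' - g') + (1-η) ((G' - G) - (g' - g))`,
and `Z` has mean zero, so the cross term vanishes in expectation:
`E‖v' - g'‖² = (1-η)²‖v - g‖² + E‖Z‖²`. By `‖p + q‖² ≤ 2‖p‖² + 2‖q‖²`,
`E‖Z‖² ≤ 2η²σ² + 2(1-η)² Var(G' - G)`, and the variance of `G' - G` is at most its second
moment, hence at most `ℓ²‖x' - x‖²`. Finally `(1-η)² ≤ 1-η ≤ 1`.

If `v' - g'` is not in `L²`, the Bochner integral on the left is `0`. If it is, then so is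
`G' - g'`, because `G' - G` is bounded and `η ≠ 0`.
-/

open MeasureTheory

section NormedAddCommGroup

variable {Ω E : Type*} [MeasurableSpace Ω] {μ : Measure Ω} [NormedAddCommGroup E]

lemma integral_norm_sq_le_of_ae_norm_le [IsProbabilityMeasure μ] {Y : Ω → E} {L : ℝ}
    (hY : ∀ᵐ ω ∂μ, ‖Y ω‖ ≤ L) :
    ∫ ω, ‖Y ω‖ ^ 2 ∂μ ≤ L ^ 2 := by
  calc ∫ ω, ‖Y ω‖ ^ 2 ∂μ ≤ ∫ _, L ^ 2 ∂μ :=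
        integral_mono_of_nonneg (ae_of_all _ fun _ => by positivity) (integrable_const _)
          (hY.mono fun _ h => pow_le_pow_left₀ (norm_nonneg _) h 2)
    _ = L ^ 2 := by simp

lemma integral_norm_sq_eq_zero_of_not_memLp {X : Ω → E} (hX : AEStronglyMeasurable X μ)
    (hX2 : ¬MemLp X 2 μ) :
    ∫ ω, ‖X ω‖ ^ 2 ∂μ = 0 :=
  integral_undef fun h => hX2 ((memLp_two_iff_integrable_sq_norm hX).mpr h)

variable [NormedSpace ℝ E]

lemma integral_sub_eq_zero_of_integral_eq [CompleteSpace E] [IsProbabilityMeasure μ]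
    {X : Ω → E} {m : E} (hX : Integrable X μ) (hm : ∫ ω, X ω ∂μ = m) :
    ∫ ω, (X ω - m) ∂μ = 0 := by
  rw [integral_sub hX (integrable_const m), hm]
  simp

lemma norm_smul_add_smul_sq_le (a b : ℝ) (u w : E) :
    ‖a • u + b • w‖ ^ 2 ≤ 2 * a ^ 2 * ‖u‖ ^ 2 + 2 * b ^ 2 * ‖w‖ ^ 2 := by
  calc ‖a • u + b • w‖ ^ 2 ≤ (‖a • u‖ + ‖b • w‖) ^ 2 := by gcongr; exact norm_add_le _ _
    _ ≤ 2 * (‖a • u‖ ^ 2 + ‖b • w‖ ^ 2) := add_sq_le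
    _ = 2 * a ^ 2 * ‖u‖ ^ 2 + 2 * b ^ 2 * ‖w‖ ^ 2 := by
      rw [norm_smul, norm_smul, mul_pow, mul_pow, Real.norm_eq_abs, Real.norm_eq_abs, sq_abs,
        sq_abs]
      ring

lemma integral_norm_smul_add_smul_sq_le {U W : Ω → E} (hU : MemLp U 2 μ) (hW : MemLp W 2 μ)
    (a b : ℝ) :
    ∫ ω, ‖a • U ω + b • W ω‖ ^ 2 ∂μ ≤
      2 * a ^ 2 * ∫ ω, ‖U ω‖ ^ 2 ∂μ + 2 * b ^ 2 * ∫ ω, ‖W ω‖ ^ 2 ∂μ := by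
  have hU2 := (hU.integrable_norm_pow two_ne_zero).const_mul (2 * a ^ 2)
  have hW2 := (hW.integrable_norm_pow two_ne_zero).const_mul (2 * b ^ 2)
  rw [← integral_const_mul, ← integral_const_mul, ← integral_add hU2 hW2]
  exact integral_mono_of_nonneg (ae_of_all _ fun _ => by positivity) (hU2.add hW2)
    (ae_of_all _ fun ω => norm_smul_add_smul_sq_le a b (U ω) (W ω))

lemma MemLp.of_smul_add {p : ENNReal} {c : ℝ} (hc : c ≠ 0) {U V : Ω → E} (hV : MemLp V p μ)
    (h : MemLp (fun ω => c • U ω + V ω) p μ) : MemLp U p μ := by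
  convert (h.sub hV).const_smul c⁻¹ using 1
  funext ω
  simp [smul_smul, inv_mul_cancel₀ hc]

end NormedAddCommGroup

section InnerProductSpace

variable {Ω E : Type*} [MeasurableSpace Ω] {μ : Measure Ω} [IsProbabilityMeasure μ]
  [NormedAddCommGroup E] [InnerProductSpace ℝ E] [CompleteSpace E]

lemma integral_norm_const_add_sq {Z : Ω → E} (hZ : MemLp Z 2 μ) (hZ0 : ∫ ω, Z ω ∂μ = 0)
    (a : E) :
    ∫ ω, ‖a + Z ω‖ ^ 2 ∂μ = ‖a‖ ^ 2 + ∫ ω, ‖Z ω‖ ^ 2 ∂μ := by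
  have hZint : Integrable Z μ := hZ.integrable one_le_two
  have hinner : Integrable (fun ω => 2 * inner ℝ a (Z ω)) μ := (hZint.const_inner a).const_mul 2
  have hlinear : Integrable (fun ω => ‖a‖ ^ 2 + 2 * inner ℝ a (Z ω)) μ :=
    (integrable_const _).add hinner
  simp_rw [norm_add_sq_real]
  rw [integral_add hlinear (hZ.integrable_norm_pow two_ne_zero),
    integral_add (integrable_const _) hinner, integral_const_mul, integral_inner hZint, hZ0]
  simp

lemma integral_norm_sub_sq_le_of_integral_eq {Y : Ω → E} {m : E} (hY : MemLp Y 2 μ)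
    (hm : ∫ ω, Y ω ∂μ = m) :
    ∫ ω, ‖Y ω - m‖ ^ 2 ∂μ ≤ ∫ ω, ‖Y ω‖ ^ 2 ∂μ := by
  have hpythagoras := integral_norm_const_add_sq (Z := fun ω => Y ω - m) (hY.sub (memLp_const m))
    (integral_sub_eq_zero_of_integral_eq (hY.integrable one_le_two) hm) m
  simp only [add_sub_cancel] at hpythagoras
  rw [hpythagoras]
  exact le_add_of_nonneg_left (sq_nonneg _)

lemma integral_norm_const_add_smul_add_smul_sq_le {U W : Ω → E}
    (hU : MemLp U 2 μ) (hU0 : ∫ ω, U ω ∂μ = 0) (hW : MemLp W 2 μ) (hW0 : ∫ ω, W ω ∂μ = 0)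
    (a : E) (b c : ℝ) :
    ∫ ω, ‖a + (b • U ω + c • W ω)‖ ^ 2 ∂μ ≤
      ‖a‖ ^ 2 + (2 * b ^ 2 * ∫ ω, ‖U ω‖ ^ 2 ∂μ + 2 * c ^ 2 * ∫ ω, ‖W ω‖ ^ 2 ∂μ) := by
  have hZ : MemLp (fun ω => b • U ω + c • W ω) 2 μ := (hU.const_smul b).add (hW.const_smul c)
  have hbU : Integrable (fun ω => b • U ω) μ := (hU.integrable one_le_two).smul b
  have hcW : Integrable (fun ω => c • W ω) μ := (hW.integrable one_le_two).smul c
  have hcentered : ∫ ω, (b • U ω + c • W ω) ∂μ = 0 := by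
    rw [integral_add hbU hcW, integral_smul, integral_smul, hU0, hW0, smul_zero, smul_zero,
      add_zero]
  rw [integral_norm_const_add_sq hZ hcentered a]
  gcongr
  exact integral_norm_smul_add_smul_sq_le hU hW b c

end InnerProductSpace

theorem stmt_9_general {Ω : Type*} [MeasurableSpace Ω] (μ : Measure Ω)
    [IsProbabilityMeasure μ]
    {E : Type*} [NormedAddCommGroup E] [InnerProductSpace ℝ E] [CompleteSpace E]
    (f : E → ℝ)
    (x x' v : E) (η σ ℓ : ℝ)
    (hη : 0 < η) (hη1 : η ≤ 1)
    (G G' : Ω → E) (hGint : Integrable G μ) (hG'int : Integrable G' μ)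
    (hGmean : ∫ ω, G ω ∂μ = gradient f x)
    (hG'mean : ∫ ω, G' ω ∂μ = gradient f x')
    (hG'var : ∫ ω, ‖G' ω - gradient f x'‖ ^ 2 ∂μ ≤ σ ^ 2)
    (hlipae : ∀ᵐ ω ∂μ, ‖G' ω - G ω‖ ≤ ℓ * ‖x' - x‖)
    (v' : Ω → E)
    (hv' : ∀ ω, v' ω = (1 - η) • v + η • G' ω + (1 - η) • (G' ω - G ω)) :
    ∫ ω, ‖v' ω - gradient f x'‖ ^ 2 ∂μ ≤
      (1 - η) * ‖v - gradient f x‖ ^ 2 + 2 * η ^ 2 * σ ^ 2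
        + 2 * ℓ ^ 2 * ‖x' - x‖ ^ 2 := by
  set g := gradient f x
  set g' := gradient f x'
  have hη0 : 0 ≤ 1 - η := by linarith
  by_cases hv'L2 : MemLp (fun ω => v' ω - g') 2 μ
  swap
  · rw [integral_norm_sq_eq_zero_of_not_memLp (by simp only [hv']; fun_prop) hv'L2]
    have := mul_nonneg hη0 (sq_nonneg ‖v - g‖)
    positivity
  set Y := fun ω => G' ω - G ω
  have hdecomp : ∀ ω, v' ω - g' =
      (1 - η) • (v - g) + (η • (G' ω - g') + (1 - η) • (Y ω - (g' - g))) := by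
    intro ω
    simp only [hv', Y]
    module
  have hY : MemLp Y 2 μ := MemLp.of_bound (hG'int.sub hGint).aestronglyMeasurable _ hlipae
  have hYmean : ∫ ω, Y ω ∂μ = g' - g := by
    simp only [Y]
    rw [integral_sub hG'int hGint, hGmean, hG'mean]
  have hW : MemLp (fun ω => Y ω - (g' - g)) 2 μ := hY.sub (memLp_const _)
  have hU : MemLp (fun ω => G' ω - g') 2 μ := by
    refine MemLp.of_smul_add hη.ne' (hW.const_smul (1 - η)) ?_
    convert hv'L2.sub (memLp_const ((1 - η) • (v - g))) using 1
    funext ω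
    simp [hdecomp]
  have hWvar : ∫ ω, ‖Y ω - (g' - g)‖ ^ 2 ∂μ ≤ ℓ ^ 2 * ‖x' - x‖ ^ 2 := by
    rw [← mul_pow]
    exact (integral_norm_sub_sq_le_of_integral_eq hY hYmean).trans
      (integral_norm_sq_le_of_ae_norm_le hlipae)
  have hsq : (1 - η) ^ 2 ≤ 1 - η := by nlinarith
  calc ∫ ω, ‖v' ω - g'‖ ^ 2 ∂μ
      ≤ ‖(1 - η) • (v - g)‖ ^ 2 + (2 * η ^ 2 * ∫ ω, ‖G' ω - g'‖ ^ 2 ∂μ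
          + 2 * (1 - η) ^ 2 * ∫ ω, ‖Y ω - (g' - g)‖ ^ 2 ∂μ) := by
        simp_rw [hdecomp]
        exact integral_norm_const_add_smul_add_smul_sq_le hU
          (integral_sub_eq_zero_of_integral_eq hG'int hG'mean) hW
          (integral_sub_eq_zero_of_integral_eq (hY.integrable one_le_two) hYmean) _ _ _
    _ ≤ (1 - η) ^ 2 * ‖v - g‖ ^ 2 +
          (2 * η ^ 2 * σ ^ 2 + 2 * (1 - η) ^ 2 * (ℓ ^ 2 * ‖x' - x‖ ^ 2)) := by
        rw [norm_smul, mul_pow, Real.norm_of_nonneg hη0]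
        gcongr
    _ ≤ _ := by
        linarith [mul_le_mul_of_nonneg_right hsq (sq_nonneg ‖v - g‖),
          mul_le_mul_of_nonneg_right (hsq.trans (by linarith) : (1 - η) ^ 2 ≤ 1)
            (by positivity : 0 ≤ ℓ ^ 2 * ‖x' - x‖ ^ 2)]

/-- One-step deviation bound of the STORM-type variance-reduced momentum
estimator `v' = (1-η)•v + η•G' + (1-η)•(G' - G)` used in Byz-VR-DM21. -/
theorem stmt_9 {Ω : Type*} [MeasurableSpace Ω] (μ : Measure Ω)
    [IsProbabilityMeasure μ]
    {E : Type*} [NormedAddCommGroup E] [InnerProductSpace ℝ E] [CompleteSpace E]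
    (f : E → ℝ) (hdiff : Differentiable ℝ f)
    (x x' v : E) (η σ ℓ : ℝ)
    (hη : 0 < η) (hη1 : η ≤ 1) (hσ : 0 ≤ σ) (hℓ : 0 ≤ ℓ)
    (G G' : Ω → E) (hGint : Integrable G μ) (hG'int : Integrable G' μ)
    (hGmean : ∫ ω, G ω ∂μ = gradient f x)
    (hG'mean : ∫ ω, G' ω ∂μ = gradient f x')
    (hG'var : ∫ ω, ‖G' ω - gradient f x'‖ ^ 2 ∂μ ≤ σ ^ 2)
    (hlipae : ∀ᵐ ω ∂μ, ‖G' ω - G ω‖ ≤ ℓ * ‖x' - x‖)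
    (v' : Ω → E)
    (hv' : ∀ ω, v' ω = (1 - η) • v + η • G' ω + (1 - η) • (G' ω - G ω)) :
    ∫ ω, ‖v' ω - gradient f x'‖ ^ 2 ∂μ ≤
      (1 - η) * ‖v - gradient f x‖ ^ 2 + 2 * η ^ 2 * σ ^ 2
        + 2 * ℓ ^ 2 * ‖x' - x‖ ^ 2 :=
  stmt_9_general μ f x x' v η σ ℓ hη hη1 G G' hGint hG'int hGmean hG'mean hG'var hlipae v' hv'
end
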